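/- arXiv:1709.00894 — 2 statements merged into one kernel-verified Lean document; each statement's English description precedes it below -/
import Mathlib

section
/- Let n ≥ 1, let Ω ⊆ ℝⁿ be open, and let u : Ω → ℝ be continuous. Suppose the open set {x ∈ Ω : u(x) ≠ 0} has exactly m connected components U₁, …, U_m, and choose points x_i ∈ U_i for i = 1, …, m. Let (Ω_k)_{k≥1} be open subsets of ℝⁿ such that for every compact K ⊂ Ω there is k₀ with K ⊂ Ω_k for all k ≥ k₀, and let v_k : Ω_k → ℝ be continuous functions such that sup_K |v_k − u| → 0 as k → ∞ for every compact K ⊂ Ω. Then for every y ∈ Ω with u(y) ≠ 0, say y ∈ U_i, there exists k₁ such that for all k ≥ k₁ one has v_k(x_i) ≠ 0, v_k(y) ≠ 0, and y belongs to the same connected component of {x ∈ Ω_k : v_k(x) ≠ 0} as x_i. -/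
/-- Stability of membership in a nodal domain under locally uniform perturbation:
if `y` lies in the nodal domain `U i` of `u` (with base point `x i`), then for all
large `k` the perturbed function `v k` is nonzero at `x i` and `y`, and `y` lies in
the same nodal domain of `v k` as `x i`. -/
theorem stmt_8 {n : ℕ} (hn : 1 ≤ n)
    (Ω : Set (EuclideanSpace ℝ (Fin n))) (hΩ : IsOpen Ω)
    (u : EuclideanSpace ℝ (Fin n) → ℝ) (hu : ContinuousOn u Ω)
    (m : ℕ) (U : Fin m → Set (EuclideanSpace ℝ (Fin n)))
    (x : Fin m → EuclideanSpace ℝ (Fin n))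
    (hxU : ∀ i, x i ∈ U i)
    (hUcomp : ∀ i, U i = connectedComponentIn {z ∈ Ω | u z ≠ 0} (x i))
    (hUinj : Function.Injective U)
    (hUcover : {z ∈ Ω | u z ≠ 0} = ⋃ i, U i)
    (Ωk : ℕ → Set (EuclideanSpace ℝ (Fin n))) (hΩk : ∀ k, IsOpen (Ωk k))
    (hexh : ∀ K : Set (EuclideanSpace ℝ (Fin n)), IsCompact K → K ⊆ Ω →
      ∃ k₀, ∀ k ≥ k₀, K ⊆ Ωk k)
    (v : ℕ → EuclideanSpace ℝ (Fin n) → ℝ) (hv : ∀ k, ContinuousOn (v k) (Ωk k))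
    (hconv : ∀ K : Set (EuclideanSpace ℝ (Fin n)), IsCompact K → K ⊆ Ω →
      ∀ δ > 0, ∃ k₀, ∀ k ≥ k₀, ∀ z ∈ K, |v k z - u z| < δ) :
    ∀ y ∈ Ω, u y ≠ 0 → ∀ i, y ∈ U i →
      ∃ k₁, ∀ k ≥ k₁, v k (x i) ≠ 0 ∧ v k y ≠ 0 ∧
        y ∈ connectedComponentIn {z ∈ Ωk k | v k z ≠ 0} (x i) := by
  intro y hyΩ hy i hyU
  -- The nodal set of u is open
  set W : Set (EuclideanSpace ℝ (Fin n)) := {z ∈ Ω | u z ≠ 0} with hW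
  have hWopen : IsOpen W := by
    have heq : W = Ω ∩ u ⁻¹' {0}ᶜ := by
      ext z
      simp only [hW, Set.mem_setOf_eq, Set.mem_inter_iff, Set.mem_preimage,
        Set.mem_compl_iff, Set.mem_singleton_iff]
    rw [heq]
    exact hu.isOpen_inter_preimage hΩ isOpen_compl_singleton
  have hWsub : W ⊆ Ω := fun z hz => hz.1
  -- U i is open, connected, hence path connected
  have hUopen : IsOpen (U i) := by
    rw [hUcomp i]; exact hWopen.connectedComponentIn
  have hxW : x i ∈ W := by
    have := hxU i
    rw [hUcomp i] at this
    exact connectedComponentIn_subset W (x i) this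
  have hUconn : IsConnected (U i) := by
    rw [hUcomp i]
    exact isConnected_connectedComponentIn_iff.mpr hxW
  have hUpath : IsPathConnected (U i) := hUopen.isConnected_iff_isPathConnected.mp hUconn
  -- get a path from x i to y inside U i
  obtain ⟨γ, hγ⟩ := (hUpath.joinedIn (x i) (hxU i) y hyU)
  set K : Set (EuclideanSpace ℝ (Fin n)) := Set.range γ with hK
  have hKU : K ⊆ U i := by
    rintro z ⟨t, rfl⟩; exact hγ t
  have hKW : K ⊆ W := hKU.trans (by rw [hUcomp i]; exact connectedComponentIn_subset _ _)
  have hKΩ : K ⊆ Ω := hKW.trans hWsub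
  have hKcomp : IsCompact K := isCompact_range γ.continuous
  have hKconn : IsPreconnected K := (isConnected_range γ.continuous).isPreconnected
  have hxK : x i ∈ K := ⟨0, γ.source⟩
  have hyK : y ∈ K := ⟨1, γ.target⟩
  -- minimum of |u| on K
  have hcont : ContinuousOn (fun z => |u z|) K := (hu.mono hKΩ).abs
  obtain ⟨z₀, hz₀K, hz₀min⟩ := hKcomp.exists_isMinOn ⟨_, hxK⟩ hcont
  set ε : ℝ := |u z₀| with hε
  have hεpos : 0 < ε := abs_pos.mpr (hKW hz₀K).2
  have hεle : ∀ z ∈ K, ε ≤ |u z| := fun z hz => hz₀min hz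
  obtain ⟨k₀, hk₀⟩ := hexh K hKcomp hKΩ
  obtain ⟨k₀', hk₀'⟩ := hconv K hKcomp hKΩ ε hεpos
  refine ⟨max k₀ k₀', fun k hk => ?_⟩
  have hk1 : k ≥ k₀ := le_trans (le_max_left _ _) hk
  have hk2 : k ≥ k₀' := le_trans (le_max_right _ _) hk
  have hvne : ∀ z ∈ K, v k z ≠ 0 := by
    intro z hz hzero
    have h1 := hk₀' k hk2 z hz
    rw [hzero] at h1
    simp only [zero_sub, abs_neg] at h1
    exact absurd h1 (not_lt.mpr (hεle z hz))
  have hKsub : K ⊆ {z ∈ Ωk k | v k z ≠ 0} := fun z hz => ⟨hk₀ k hk1 hz, hvne z hz⟩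
  exact ⟨hvne _ hxK, hvne _ hyK,
    (hKconn.subset_connectedComponentIn hxK hKsub) hyK⟩
end

section
/- Let n ≥ 1, let Ω ⊆ ℝⁿ be a bounded open set, and let u : Ω → ℝ be continuous such that {x ∈ Ω : u(x) = 0} has Lebesgue measure zero and {x ∈ Ω : u(x) ≠ 0} has exactly m connected components U₁, …, U_m; choose x_i ∈ U_i. Let (Ω_k)_{k≥1} be bounded open subsets of ℝⁿ such that the Lebesgue measure of Ω_k \ Ω tends to 0 as k → ∞ and every compact K ⊂ Ω satisfies K ⊂ Ω_k for all large k, and let v_k : Ω_k → ℝ be continuous with sup_K |v_k − u| → 0 for every compact K ⊂ Ω. For k large enough that v_k(x_i) ≠ 0 for all i, let V_{k,i} be the connected component of {x ∈ Ω_k : v_k(x) ≠ 0} containing x_i. Then the Lebesgue measure of Ω_k \ (V_{k,1} ∪ … ∪ V_{k,m}) tends to 0 as k → ∞. -/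
/-!
Every point `z` of a nodal domain `U_i` of `u` is joined to `x i` by a path inside `U_i`. Its
range is a compact connected set on which `|u|` is bounded below, so for large `k` it lies in
`Ω_k` and `v k` does not vanish on it; hence `z` eventually lies in `V_{k,i}`. By dominated
convergence on the finite-measure set `Ω`, the part of `{u ≠ 0}` missed by the `V_{k,i}` has
vanishing volume, and the rest of `Ω_k \ ⋃ i, V_{k,i}` lies in `(Ω_k \ Ω) ∪ {u = 0}`.
-/

open MeasureTheory Filter Set Topology

theorem IsOpen.joinedIn_of_mem_connectedComponentIn {X : Type*} [TopologicalSpace X]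
    [LocallyPathConnectedSpace X] {W : Set X} (hW : IsOpen W) {x z : X}
    (hz : z ∈ connectedComponentIn W x) : JoinedIn W x z := by
  have hx : x ∈ W := connectedComponentIn_nonempty_iff.mp ⟨z, hz⟩
  have hC : IsPathConnected (connectedComponentIn W x) :=
    hW.connectedComponentIn.isConnected_iff_isPathConnected.mp
      (isConnected_connectedComponentIn_iff.mpr hx)
  exact (hC.joinedIn x (mem_connectedComponentIn hx) z hz).mono
    (connectedComponentIn_subset W x)

theorem ContinuousOn.isOpen_sep_ne_zero {X E : Type*} [TopologicalSpace X] [NormedAddCommGroup E]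
    {Ω : Set X} {u : X → E} (hu : ContinuousOn u Ω) (hΩ : IsOpen Ω) :
    IsOpen {z ∈ Ω | u z ≠ 0} :=
  hu.isOpen_inter_preimage hΩ isOpen_compl_singleton

theorem TendstoUniformlyOn.eventually_forall_ne_zero {ι X E : Type*} [TopologicalSpace X]
    [NormedAddCommGroup E] {l : Filter ι} {F : ι → X → E} {f : X → E} {K : Set X}
    (hF : TendstoUniformlyOn F f l K) (hK : IsCompact K) (hf : ContinuousOn f K)
    (hf0 : ∀ z ∈ K, f z ≠ 0) : ∀ᶠ i in l, ∀ z ∈ K, F i z ≠ 0 := by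
  obtain ⟨δ, hδ, hfδ⟩ := hK.exists_forall_le' hf.norm fun z hz => norm_pos_iff.mpr (hf0 z hz)
  filter_upwards [Metric.tendstoUniformlyOn_iff.mp hF δ hδ] with i hi z hz hFz
  have := hi z hz
  rw [dist_eq_norm, hFz, sub_zero] at this
  exact (hfδ z hz).not_gt this

theorem eventually_mem_connectedComponentIn_of_tendstoUniformlyOn {ι X E : Type*}
    [TopologicalSpace X] [LocallyPathConnectedSpace X] [NormedAddCommGroup E] {l : Filter ι}
    {Ω : Set X} {D : ι → Set X} {u : X → E} {v : ι → X → E}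
    (hΩ : IsOpen Ω) (hu : ContinuousOn u Ω)
    (hD : ∀ K, IsCompact K → K ⊆ Ω → ∀ᶠ i in l, K ⊆ D i)
    (hv : ∀ K, IsCompact K → K ⊆ Ω → TendstoUniformlyOn v u l K)
    {x z : X} (hz : z ∈ connectedComponentIn {y ∈ Ω | u y ≠ 0} x) :
    ∀ᶠ i in l, z ∈ connectedComponentIn {y ∈ D i | v i y ≠ 0} x := by
  obtain ⟨γ, hγ⟩ := (hu.isOpen_sep_ne_zero hΩ).joinedIn_of_mem_connectedComponentIn hz
  have hK : IsCompact (range γ) := isCompact_range γ.continuous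
  have hKΩ : range γ ⊆ Ω := range_subset_iff.mpr fun t => (hγ t).1
  filter_upwards [hD _ hK hKΩ, (hv _ hK hKΩ).eventually_forall_ne_zero hK (hu.mono hKΩ)
    (forall_mem_range.mpr fun t => (hγ t).2)] with i hKD hv0
  have hKnodal : range γ ⊆ {y ∈ D i | v i y ≠ 0} := fun y hy => ⟨hKD hy, hv0 y hy⟩
  exact (isConnected_range γ.continuous).isPreconnected.subset_connectedComponentIn
    ⟨0, γ.source⟩ hKnodal ⟨1, γ.target⟩

theorem measure_diff_le_measure_diff_add_sep {α : Type*} [MeasurableSpace α] (μ : Measure α)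
    (D Ω T : Set α) (p : α → Prop) :
    μ (D \ T) ≤ μ (D \ Ω) + μ {z ∈ Ω | p z} + μ ({z ∈ Ω | ¬ p z} \ T) := by
  calc μ (D \ T) ≤ μ ((D \ Ω) ∪ {z ∈ Ω | p z} ∪ ({z ∈ Ω | ¬ p z} \ T)) := by
        refine measure_mono fun z hz => ?_
        by_cases hzΩ : z ∈ Ω
        · by_cases hp : p z
          · exact Or.inl (Or.inr ⟨hzΩ, hp⟩)
          · exact Or.inr ⟨⟨hzΩ, hp⟩, hz.2⟩
        · exact Or.inl (Or.inl ⟨hz.1, hzΩ⟩)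
    _ ≤ _ := (measure_union_le _ _).trans (add_le_add_left (measure_union_le _ _) _)

theorem tendsto_measure_zero_of_eventually_notMem {α ι : Type*} [MeasurableSpace α]
    {μ : Measure α} {l : Filter ι} [l.IsCountablyGenerated] {S : ι → Set α} {B : Set α}
    (hS : ∀ i, MeasurableSet (S i)) (hB : MeasurableSet B) (hμB : μ B ≠ ⊤)
    (hSB : ∀ i, S i ⊆ B) (h : ∀ z, ∀ᶠ i in l, z ∉ S i) :
    Tendsto (fun i => μ (S i)) l (𝓝 0) := by
  simpa only [measure_empty] using tendsto_measure_of_tendsto_indicator l (A := ∅) hS hB hμB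
    (Eventually.of_forall hSB) fun z => (h z).mono fun i hi => iff_of_false hi id

theorem stmt_9_general {n : ℕ}
    (Ω : Set (EuclideanSpace ℝ (Fin n))) (hΩ : IsOpen Ω) (hΩb : Bornology.IsBounded Ω)
    (u : EuclideanSpace ℝ (Fin n) → ℝ) (hu : ContinuousOn u Ω)
    (hu0 : volume {z ∈ Ω | u z = 0} = 0)
    (m : ℕ) (U : Fin m → Set (EuclideanSpace ℝ (Fin n)))
    (x : Fin m → EuclideanSpace ℝ (Fin n))
    (hUcomp : ∀ i, U i = connectedComponentIn {z ∈ Ω | u z ≠ 0} (x i))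
    (hUcover : {z ∈ Ω | u z ≠ 0} = ⋃ i, U i)
    (Ωk : ℕ → Set (EuclideanSpace ℝ (Fin n))) (hΩk : ∀ k, IsOpen (Ωk k))
    (hmeas : Filter.Tendsto (fun k => volume (Ωk k \ Ω)) Filter.atTop (nhds 0))
    (hexh : ∀ K : Set (EuclideanSpace ℝ (Fin n)), IsCompact K → K ⊆ Ω →
      ∃ k₀, ∀ k ≥ k₀, K ⊆ Ωk k)
    (v : ℕ → EuclideanSpace ℝ (Fin n) → ℝ) (hv : ∀ k, ContinuousOn (v k) (Ωk k))
    (hconv : ∀ K : Set (EuclideanSpace ℝ (Fin n)), IsCompact K → K ⊆ Ω →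
      ∀ δ > 0, ∃ k₀, ∀ k ≥ k₀, ∀ z ∈ K, |v k z - u z| < δ) :
    Filter.Tendsto
      (fun k => volume
        (Ωk k \ ⋃ i, connectedComponentIn {z ∈ Ωk k | v k z ≠ 0} (x i)))
      Filter.atTop (nhds 0) := by
  set V := fun k => ⋃ i, connectedComponentIn {z ∈ Ωk k | v k z ≠ 0} (x i)
  have hunif : ∀ K, IsCompact K → K ⊆ Ω → TendstoUniformlyOn v u atTop K := by
    refine fun K hK hKΩ => Metric.tendstoUniformlyOn_iff.mpr fun δ hδ => ?_
    obtain ⟨k₀, hk₀⟩ := hconv K hK hKΩ δ hδ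
    exact eventually_atTop.mpr ⟨k₀, fun k hk z hz => by
      simpa only [Real.dist_eq, abs_sub_comm] using hk₀ k hk z hz⟩
  have hcover : ∀ z ∈ {z ∈ Ω | u z ≠ 0}, ∀ᶠ k in atTop, z ∈ V k := by
    intro z hz
    obtain ⟨i, hzU⟩ := mem_iUnion.mp (hUcover ▸ hz)
    exact (eventually_mem_connectedComponentIn_of_tendstoUniformlyOn hΩ hu
      (fun K hK hKΩ => eventually_atTop.mpr (hexh K hK hKΩ)) hunif
      (hUcomp i ▸ hzU)).mono fun k hk => mem_iUnion.mpr ⟨i, hk⟩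
  have hVopen : ∀ k, IsOpen (V k) := fun k =>
    isOpen_iUnion fun i => ((hv k).isOpen_sep_ne_zero (hΩk k)).connectedComponentIn
  have hmissed : Tendsto (fun k => volume ({z ∈ Ω | u z ≠ 0} \ V k)) atTop (𝓝 0) :=
    tendsto_measure_zero_of_eventually_notMem
      (fun k => (hu.isOpen_sep_ne_zero hΩ).measurableSet.diff (hVopen k).measurableSet)
      hΩ.measurableSet hΩb.measure_lt_top.ne (fun k z hz => hz.1.1) fun z =>
      (em (z ∈ {z ∈ Ω | u z ≠ 0})).elim (fun hz => (hcover z hz).mono fun k hk h => h.2 hk)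
        fun hz => Eventually.of_forall fun k h => hz h.1
  refine tendsto_of_tendsto_of_tendsto_of_le_of_le tendsto_const_nhds
    (by simpa only [hu0, add_zero] using hmeas.add hmissed) (fun _ => zero_le) fun k => ?_
  simpa only [hu0, add_zero] using
    measure_diff_le_measure_diff_add_sep volume (Ωk k) Ω (V k) (u · = 0)

/-- The perturbed domain `Ω_k` is, up to a set of vanishing volume, covered by the `m`
tracked nodal domains `V_{k,i}` of the perturbed function `v k` (the connected components
of `{v k ≠ 0}` in `Ω_k` containing the base points `x i` of the nodal domains of `u`). -/
theorem stmt_9 {n : ℕ} (hn : 1 ≤ n)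
    (Ω : Set (EuclideanSpace ℝ (Fin n))) (hΩ : IsOpen Ω) (hΩb : Bornology.IsBounded Ω)
    (u : EuclideanSpace ℝ (Fin n) → ℝ) (hu : ContinuousOn u Ω)
    (hu0 : volume {z ∈ Ω | u z = 0} = 0)
    (m : ℕ) (U : Fin m → Set (EuclideanSpace ℝ (Fin n)))
    (x : Fin m → EuclideanSpace ℝ (Fin n))
    (hxU : ∀ i, x i ∈ U i)
    (hUcomp : ∀ i, U i = connectedComponentIn {z ∈ Ω | u z ≠ 0} (x i))
    (hUinj : Function.Injective U)
    (hUcover : {z ∈ Ω | u z ≠ 0} = ⋃ i, U i)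
    (Ωk : ℕ → Set (EuclideanSpace ℝ (Fin n))) (hΩk : ∀ k, IsOpen (Ωk k))
    (hΩkb : ∀ k, Bornology.IsBounded (Ωk k))
    (hmeas : Filter.Tendsto (fun k => volume (Ωk k \ Ω)) Filter.atTop (nhds 0))
    (hexh : ∀ K : Set (EuclideanSpace ℝ (Fin n)), IsCompact K → K ⊆ Ω →
      ∃ k₀, ∀ k ≥ k₀, K ⊆ Ωk k)
    (v : ℕ → EuclideanSpace ℝ (Fin n) → ℝ) (hv : ∀ k, ContinuousOn (v k) (Ωk k))
    (hconv : ∀ K : Set (EuclideanSpace ℝ (Fin n)), IsCompact K → K ⊆ Ω →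
      ∀ δ > 0, ∃ k₀, ∀ k ≥ k₀, ∀ z ∈ K, |v k z - u z| < δ) :
    Filter.Tendsto
      (fun k => volume
        (Ωk k \ ⋃ i, connectedComponentIn {z ∈ Ωk k | v k z ≠ 0} (x i)))
      Filter.atTop (nhds 0) :=
  stmt_9_general Ω hΩ hΩb u hu hu0 m U x hUcomp hUcover Ωk hΩk hmeas hexh v hv hconv
end
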